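/- For n ≥ 4, the exponent set of PSC_n^{0,0} equals {2t : 2 ≤ t ≤ n−2}; in particular the maximum exponent of a primitive symmetric companion matrix with zero diagonal and a_{n,1}=0 is 2(n−2), attained by the lollipop graph consisting of a path 1−2−⋯−n together with the edge {n, n−2}. -/

import Mathlib

/-
The graph of a matrix in `PSC_n^{0,0}` is the path `0 — 1 — ⋯ — (n-1)` plus chords from `n-1` to
vertices in `[1, n-2]`. Without `n-1` it is bipartite, so every odd closed walk passes through
`n-1`. If `A ^ e` is entrywise positive for an odd `e`, every vertex therefore has walks to `n-1`
of both parities with total length at most `e`, and pairing these gives even walks of length at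
most `e - 1` between any two vertices: the exponent is even. A chord closing an odd cycle gives
such round trips of length at most `2n - 3`, so the exponent is at most `2n - 4`. If all chords
land in `[s, n-2]`, an even walk from `0` to `1` must visit `n-1` and has length at least
`2s + 1`, so the exponent is at least `2s + 2`; with chords to all of `[s, n-2]` this is
attained, and the lollipop is the case `s = n - 3`.
-/

def IsPrimitive {n : ℕ} (A : Matrix (Fin n) (Fin n) ℝ) : Prop :=
  (∀ i j, 0 ≤ A i j) ∧ ∃ k : ℕ, 0 < k ∧ ∀ i j, 0 < (A ^ k) i j

def ExpIs {n : ℕ} (A : Matrix (Fin n) (Fin n) ℝ) (e : ℕ) : Prop :=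
  IsLeast {k : ℕ | 0 < k ∧ ∀ i j, 0 < (A ^ k) i j} e

/-- A `(0,1)` companion matrix: superdiagonal entries `1` and all other entries
`0` in the first `n-1` rows; last-row entries in `{0,1}`. -/
def IsCompanion {n : ℕ} (C : Matrix (Fin n) (Fin n) ℝ) : Prop :=
  ∀ i j : Fin n,
    if (i : ℕ) + 1 < n then (C i j = if (j : ℕ) = (i : ℕ) + 1 then 1 else 0)
    else (C i j = 0 ∨ C i j = 1)

/-- The set `C_n^{α,ε}` of symmetric companion matrices `C + Cᵀ` with
`c_{n,1} = α` and `c_{n,n} = ε`. -/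
def companionClass (n : ℕ) (hn : 0 < n) (α ε : ℝ) :
    Set (Matrix (Fin n) (Fin n) ℝ) :=
  {A | ∃ C : Matrix (Fin n) (Fin n) ℝ, IsCompanion C ∧
    C ⟨n - 1, by omega⟩ ⟨0, hn⟩ = α ∧ C ⟨n - 1, by omega⟩ ⟨n - 1, by omega⟩ = ε ∧
    A = C + C.transpose}

/-- `mRun S` : the maximum length of a run of consecutive integers contained in
`S` (`0` for the empty set). -/
noncomputable def mRun (S : Set ℕ) : ℕ := sSup {L : ℕ | ∃ a : ℕ, ∀ t, t < L → a + t ∈ S}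

/-- The exponent set of a family of matrices. -/
def expSet {n : ℕ} (X : Set (Matrix (Fin n) (Fin n) ℝ)) : Set ℕ :=
  {e | ∃ A ∈ X, IsPrimitive A ∧ ExpIs A e}

namespace Matrix

variable {ι R : Type*} [Fintype ι] [DecidableEq ι] [CommRing R] [LinearOrder R]
  [IsStrictOrderedRing R] {A : Matrix ι ι R} {k : ℕ} {u v : ι}

theorem pow_zero_apply_pos_iff : 0 < (A ^ 0) u v ↔ u = v := by
  rw [pow_zero, one_apply]
  split_ifs <;> simp_all

theorem pow_add_apply_pos (hA : ∀ i j, 0 ≤ A i j) {a b : ℕ} {w : ι}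
    (h₁ : 0 < (A ^ a) u w) (h₂ : 0 < (A ^ b) w v) : 0 < (A ^ (a + b)) u v := by
  rw [pow_add, mul_apply]
  exact Finset.sum_pos' (fun x _ ↦ mul_nonneg (pow_apply_nonneg hA a u x)
    (pow_apply_nonneg hA b x v)) ⟨w, Finset.mem_univ w, mul_pos h₁ h₂⟩

theorem pow_succ_apply_pos (hA : ∀ i j, 0 ≤ A i j) {w : ι} (h₁ : 0 < A u w)
    (h₂ : 0 < (A ^ k) w v) : 0 < (A ^ (k + 1)) u v := by
  rw [add_comm]
  exact pow_add_apply_pos hA (by rwa [pow_one]) h₂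

theorem exists_pos_of_pow_succ_apply_pos (hA : ∀ i j, 0 ≤ A i j)
    (h : 0 < (A ^ (k + 1)) u v) : ∃ w, 0 < A u w ∧ 0 < (A ^ k) w v := by
  rw [pow_succ', mul_apply, Finset.sum_pos_iff_of_nonneg
    (fun x _ ↦ mul_nonneg (hA u x) (pow_apply_nonneg hA k x v))] at h
  obtain ⟨w, -, hw⟩ := h
  exact ⟨w, pos_of_mul_pos_left hw (pow_apply_nonneg hA k w v),
    pos_of_mul_pos_right hw (hA u w)⟩

omit [IsStrictOrderedRing R] in
theorem IsSymm.pow_apply_pos_comm (hS : A.IsSymm) (h : 0 < (A ^ k) u v) :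
    0 < (A ^ k) v u := by
  rwa [(hS.pow k).apply]

section Padding

variable (hA : ∀ i j, 0 ≤ A i j) (hS : A.IsSymm) (hrow : ∀ i, ∃ j, 0 < A i j)
include hA hS hrow

theorem pow_add_two_mul_apply_pos (h : 0 < (A ^ k) u v) (m : ℕ) :
    0 < (A ^ (k + 2 * m)) u v := by
  induction m with
  | zero => simpa using h
  | succ m ih =>
    obtain ⟨w, hw⟩ := hrow v
    have hvv : 0 < (A ^ (1 + 1)) v v :=
      pow_succ_apply_pos hA hw (by rwa [pow_one, hS.apply])
    simpa only [mul_add, ← add_assoc] using pow_add_apply_pos hA ih hvv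

theorem pow_apply_pos_of_le (h : 0 < (A ^ k) u v) {m : ℕ} (hkm : k ≤ m)
    (hpar : k % 2 = m % 2) : 0 < (A ^ m) u v := by
  obtain ⟨j, rfl⟩ : ∃ j, m = k + 2 * j := ⟨(m - k) / 2, by omega⟩
  exact pow_add_two_mul_apply_pos hA hS hrow h j

end Padding

theorem pow_apply_pos_parity (hA : ∀ i j, 0 ≤ A i j) (col : ι → ℕ)
    (hcol : ∀ i j, 0 < A i j → (col i + col j) % 2 = 1) (h : 0 < (A ^ k) u v) :
    (col u + col v + k) % 2 = 0 := by
  induction k generalizing u with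
  | zero => rw [pow_zero_apply_pos_iff.1 h]; omega
  | succ k ih =>
    obtain ⟨w, huw, hwv⟩ := exists_pos_of_pow_succ_apply_pos hA h
    have := hcol u w huw
    have := ih hwv
    omega

theorem pow_apply_pos_through_or_parity (hA : ∀ i j, 0 ≤ A i j) (col : ι → ℕ) {h : ι}
    (hcol : ∀ i j, 0 < A i j → i ≠ h → j ≠ h → (col i + col j) % 2 = 1)
    (huv : 0 < (A ^ k) u v) :
    (∃ a b, a + b = k ∧ 0 < (A ^ a) u h ∧ 0 < (A ^ b) h v) ∨
      (col u + col v + k) % 2 = 0 := by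
  induction k generalizing u with
  | zero => rw [pow_zero_apply_pos_iff.1 huv]; omega
  | succ k ih =>
    obtain ⟨w, huw, hwv⟩ := exists_pos_of_pow_succ_apply_pos hA huv
    by_cases hu : u = h
    · subst hu
      exact .inl ⟨0, k + 1, by omega, pow_zero_apply_pos_iff.2 rfl, huv⟩
    by_cases hw : w = h
    · subst hw
      exact .inl ⟨1, k, by omega, by rwa [pow_one], hwv⟩
    rcases ih hwv with ⟨a, b, rfl, ha, hb⟩ | hpar
    · exact .inl ⟨a + 1, b, by omega, pow_succ_apply_pos hA huw ha, hb⟩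
    · have := hcol u w huw hu hw
      omega

theorem le_add_of_pow_apply_pos (hA : ∀ i j, 0 ≤ A i j) (f : ι → ℕ)
    (hf : ∀ i j, 0 < A i j → f j ≤ f i + 1) (h : 0 < (A ^ k) u v) : f v ≤ f u + k := by
  induction k generalizing u with
  | zero => rw [pow_zero_apply_pos_iff.1 h]; omega
  | succ k ih =>
    obtain ⟨w, huw, hwv⟩ := exists_pos_of_pow_succ_apply_pos hA h
    have := hf u w huw
    have := ih hwv
    omega

def HasOddRoundTripVia (A : Matrix ι ι R) (h u : ι) (ℓ : ℕ) : Prop :=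
  ∃ a b, a + b ≤ ℓ ∧ (a + b) % 2 = 1 ∧ 0 < (A ^ a) u h ∧ 0 < (A ^ b) u h

theorem hasOddRoundTripVia_of_pow_apply_pos (hA : ∀ i j, 0 ≤ A i j) (hS : A.IsSymm)
    (col : ι → ℕ) {h : ι} (hcol : ∀ i j, 0 < A i j → i ≠ h → j ≠ h → (col i + col j) % 2 = 1)
    (hk : k % 2 = 1) (hu : 0 < (A ^ k) u u) : HasOddRoundTripVia A h u k := by
  rcases pow_apply_pos_through_or_parity hA col hcol hu with ⟨a, b, rfl, ha, hb⟩ | hpar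
  · exact ⟨a, b, le_rfl, hk, ha, hS.pow_apply_pos_comm hb⟩
  · omega

/-- Of the four walks `u → h → v` built from the two round trips, two have even length and
together have length at most `4m + 2`. -/
theorem pow_two_mul_apply_pos_of_hasOddRoundTripVia (hA : ∀ i j, 0 ≤ A i j) (hS : A.IsSymm)
    (hrow : ∀ i, ∃ j, 0 < A i j) {h : ι} {m : ℕ} (hu : HasOddRoundTripVia A h u (2 * m + 1))
    (hv : HasOddRoundTripVia A h v (2 * m + 1)) : 0 < (A ^ (2 * m)) u v := by
  obtain ⟨a, b, hab, hab2, ha, hb⟩ := hu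
  obtain ⟨c, d, hcd, hcd2, hc, hd⟩ := hv
  have route : ∀ {x y : ℕ}, 0 < (A ^ x) u h → 0 < (A ^ y) v h → (x + y) % 2 = 0 →
      x + y ≤ 2 * m → 0 < (A ^ (2 * m)) u v := fun hx hy hpar hle ↦
    pow_apply_pos_of_le hA hS hrow (pow_add_apply_pos hA hx (hS.pow_apply_pos_comm hy)) hle
      (by omega)
  rcases Nat.mod_two_eq_zero_or_one (a + c) with hac | hac
  · by_cases hle : a + c ≤ 2 * m
    · exact route ha hc hac hle
    · exact route hb hd (by omega) (by omega)
  · by_cases hle : a + d ≤ 2 * m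
    · exact route ha hd (by omega) hle
    · exact route hb hc (by omega) (by omega)

theorem pow_sub_one_apply_pos_of_odd (hA : ∀ i j, 0 ≤ A i j) (hS : A.IsSymm)
    (hrow : ∀ i, ∃ j, 0 < A i j) (col : ι → ℕ) {h : ι}
    (hcol : ∀ i j, 0 < A i j → i ≠ h → j ≠ h → (col i + col j) % 2 = 1)
    (hk : k % 2 = 1) (hpos : ∀ i j, 0 < (A ^ k) i j) (u v : ι) :
    0 < (A ^ (k - 1)) u v := by
  obtain ⟨m, rfl⟩ : ∃ m, k = 2 * m + 1 := ⟨k / 2, by omega⟩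
  exact pow_two_mul_apply_pos_of_hasOddRoundTripVia hA hS hrow
    (hasOddRoundTripVia_of_pow_apply_pos hA hS col hcol hk (hpos u u))
    (hasOddRoundTripVia_of_pow_apply_pos hA hS col hcol hk (hpos v v))

end Matrix

open Matrix hiding IsPrimitive

section

variable {n s : ℕ}

/-- The graph of positive entries of `A` is the path `0 — 1 — ⋯ — (n-1)` plus chords from the
last vertex to vertices in `[s, n - 2]`. -/
structure IsChordedPath (A : Matrix (Fin n) (Fin n) ℝ) (s : ℕ) : Prop where
  nonneg : ∀ i j, 0 ≤ A i j
  isSymm : A.IsSymm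
  pos_of_succ_eq : ∀ i j : Fin n, (i : ℕ) + 1 = j → 0 < A i j
  adj : ∀ i j : Fin n, 0 < A i j → (i : ℕ) + 1 = j ∨ (j : ℕ) + 1 = i ∨
    ((i : ℕ) + 1 = n ∧ s ≤ j ∧ (j : ℕ) + 1 < n) ∨ ((j : ℕ) + 1 = n ∧ s ≤ i ∧ (i : ℕ) + 1 < n)

namespace IsChordedPath

variable {A : Matrix (Fin n) (Fin n) ℝ} (hA : IsChordedPath A s)
include hA

theorem exists_pos (hn : 2 ≤ n) (i : Fin n) : ∃ j, 0 < A i j := by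
  by_cases hi : (i : ℕ) + 1 < n
  · exact ⟨⟨i + 1, hi⟩, hA.pos_of_succ_eq _ _ rfl⟩
  · refine ⟨⟨n - 2, by omega⟩, ?_⟩
    rw [← hA.isSymm.apply]
    exact hA.pos_of_succ_eq _ _ (by simp only; omega)

theorem val_add_val_mod_two {h : Fin n} (hh : (h : ℕ) + 1 = n) {i j : Fin n}
    (hij : 0 < A i j) (hi : i ≠ h) (hj : j ≠ h) : ((i : ℕ) + j) % 2 = 1 := by
  have := Fin.val_injective.ne hi
  have := Fin.val_injective.ne hj
  rcases hA.adj i j hij with h | h | h | h <;> omega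

theorem pow_sub_one_apply_pos_of_odd (hn : 2 ≤ n) {k : ℕ} (hk : k % 2 = 1)
    (hpos : ∀ i j, 0 < (A ^ k) i j) (u v : Fin n) : 0 < (A ^ (k - 1)) u v :=
  Matrix.pow_sub_one_apply_pos_of_odd hA.nonneg hA.isSymm (hA.exists_pos hn) (fun x ↦ (x : ℕ))
    (fun _ _ ↦ hA.val_add_val_mod_two (h := ⟨n - 1, by omega⟩) (by simp only; omega)) hk hpos u v

theorem pow_apply_pos_of_add_eq {i : Fin n} {d : ℕ} {j : Fin n} (h : (i : ℕ) + d = j) :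
    0 < (A ^ d) i j := by
  induction d generalizing j with
  | zero => exact pow_zero_apply_pos_iff.2 (Fin.ext (by omega))
  | succ d ih =>
    exact pow_add_apply_pos hA.nonneg (ih (j := ⟨i + d, by omega⟩) rfl)
      (by rw [pow_one]; exact hA.pos_of_succ_eq _ _ (by simp only; omega))

theorem pow_dist_apply_pos (i j : Fin n) : 0 < (A ^ Nat.dist i j) i j := by
  rcases le_total (i : ℕ) j with h | h
  · exact hA.pow_apply_pos_of_add_eq (by unfold Nat.dist; omega)
  · rw [Nat.dist_comm]
    exact hA.isSymm.pow_apply_pos_comm (hA.pow_apply_pos_of_add_eq (by unfold Nat.dist; omega))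

theorem pow_dist_add_one_apply_pos {h j : Fin n} (hj : 0 < A j h) (u : Fin n) :
    0 < (A ^ (Nat.dist u j + 1)) u h :=
  pow_add_apply_pos hA.nonneg (hA.pow_dist_apply_pos u j) (by rwa [pow_one])

/-- By parity a walk of even length from `0` to `1` passes through the last vertex. Along an
edge the potential `min j s`, set to `s + 1` at the last vertex, grows by at most one, so such a
walk has length at least `(s + 1) + s`. -/
theorem not_pow_two_mul_apply_pos (hs : s + 2 ≤ n) {i₀ i₁ : Fin n} (h₀ : (i₀ : ℕ) = 0)
    (h₁ : (i₁ : ℕ) = 1) : ¬ 0 < (A ^ (2 * s)) i₀ i₁ := by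
  intro hpos
  set h : Fin n := ⟨n - 1, by omega⟩
  let f : Fin n → ℕ := fun x ↦ if (x : ℕ) + 1 = n then s + 1 else min x s
  have hf : ∀ i j, 0 < A i j → f j ≤ f i + 1 := fun i j hij ↦ by
    simp only [f]
    rcases hA.adj i j hij with h | h | h | h <;> split_ifs <;> omega
  rcases pow_apply_pos_through_or_parity hA.nonneg (fun x ↦ (x : ℕ))
      (fun _ _ ↦ hA.val_add_val_mod_two (h := h) (by simp only [h]; omega)) hpos with
    ⟨a, b, hab, ha, hb⟩ | hpar
  · have h0 := le_add_of_pow_apply_pos hA.nonneg f hf ha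
    have h1 := le_add_of_pow_apply_pos hA.nonneg f hf (hA.isSymm.pow_apply_pos_comm hb)
    simp only [f, h] at h0 h1
    split_ifs at h0 h1 <;> omega
  · omega

theorem two_mul_add_one_le_of_forall_pow_apply_pos (hs : s + 2 ≤ n) {k : ℕ}
    (hk : ∀ i j, 0 < (A ^ k) i j) : 2 * (s + 1) ≤ k := by
  by_contra hlt
  obtain ⟨k', hk'k, hk'2, hk'⟩ : ∃ k', k' ≤ k ∧ k' % 2 = 0 ∧ ∀ i j, 0 < (A ^ k') i j := by
    rcases Nat.mod_two_eq_zero_or_one k with hk2 | hk2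
    · exact ⟨k, le_rfl, hk2, hk⟩
    · exact ⟨k - 1, by omega, by omega, hA.pow_sub_one_apply_pos_of_odd (by omega) hk2 hk⟩
  exact hA.not_pow_two_mul_apply_pos hs (i₀ := ⟨0, by omega⟩) (i₁ := ⟨1, by omega⟩) rfl rfl
    (pow_apply_pos_of_le hA.nonneg hA.isSymm (hA.exists_pos (by omega)) (hk' _ _)
      (by omega) (by omega))

theorem exists_odd_chord {h : Fin n} (hh : (h : ℕ) + 1 = n) (hn : 2 ≤ n) {k : ℕ}
    (hk : ∀ i j, 0 < (A ^ k) i j) :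
    ∃ c : Fin n, 0 < A c h ∧ (c : ℕ) + 3 ≤ n ∧ ((c : ℕ) + n) % 2 = 1 := by
  by_contra! hno
  have hcol : ∀ i j : Fin n, 0 < A i j → ((i : ℕ) + j) % 2 = 1 := by
    intro i j hij
    rcases hA.adj i j hij with hij' | hij' | ⟨hi, -, hj⟩ | ⟨hj, -, hi⟩
    · omega
    · omega
    · obtain rfl : i = h := Fin.ext (by omega)
      by_cases hj2 : (j : ℕ) + 2 = n
      · omega
      · have := hno j (by rwa [hA.isSymm.apply]) (by omega)
        omega
    · obtain rfl : j = h := Fin.ext (by omega)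
      by_cases hi2 : (i : ℕ) + 2 = n
      · omega
      · have := hno i hij (by omega)
        omega
  have h0 := pow_apply_pos_parity hA.nonneg _ hcol (hk ⟨0, by omega⟩ ⟨0, by omega⟩)
  have h1 := pow_apply_pos_parity hA.nonneg _ hcol (hk ⟨0, by omega⟩ ⟨1, by omega⟩)
  simp only at h0 h1
  omega

/-- The chord `c` closes the odd cycle `c — ⋯ — (n-1) — c`. -/
theorem pow_two_mul_sub_two_apply_pos {h c : Fin n} (hh : (h : ℕ) + 1 = n) (hc : 0 < A c h)
    (hc3 : (c : ℕ) + 3 ≤ n) (hcn : ((c : ℕ) + n) % 2 = 1) (u v : Fin n) :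
    0 < (A ^ (2 * (n - 2))) u v := by
  have hround : ∀ u : Fin n, HasOddRoundTripVia A h u (2 * (n - 2) + 1) := fun u ↦ by
    have := u.isLt
    exact ⟨Nat.dist u h, Nat.dist u c + 1, by unfold Nat.dist; omega,
      by unfold Nat.dist; omega, hA.pow_dist_apply_pos u h, hA.pow_dist_add_one_apply_pos hc u⟩
  exact pow_two_mul_apply_pos_of_hasOddRoundTripVia hA.nonneg hA.isSymm
    (hA.exists_pos (by omega)) (hround u) (hround v)

theorem pow_two_mul_add_one_apply_pos (hs₁ : 1 ≤ s) (hs : s + 3 ≤ n) {h : Fin n}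
    (hchord : ∀ j : Fin n, s ≤ j → (j : ℕ) + 2 ≤ n → 0 < A j h)
    (u v : Fin n) : 0 < (A ^ (2 * (s + 1))) u v := by
  have hround : ∀ u : Fin n, HasOddRoundTripVia A h u (2 * (s + 1) + 1) := fun u ↦ by
    have := u.isLt
    obtain ⟨j, hsj, hjn, hdist⟩ : ∃ j : ℕ, s ≤ j ∧ j + 3 ≤ n ∧
        Nat.dist u j + Nat.dist u (j + 1) ≤ 2 * s + 1 :=
      ⟨min (max (u : ℕ) (s + 1)) (n - 2) - 1, by omega, by omega, by unfold Nat.dist; omega⟩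
    exact ⟨Nat.dist u j + 1, Nat.dist u (j + 1) + 1, by omega, by unfold Nat.dist at *; omega,
      hA.pow_dist_add_one_apply_pos (j := ⟨j, by omega⟩) (hchord _ hsj (by simp only; omega)) u,
      hA.pow_dist_add_one_apply_pos (j := ⟨j + 1, by omega⟩)
        (hchord _ (by simp only; omega) (by simp only; omega)) u⟩
  exact pow_two_mul_apply_pos_of_hasOddRoundTripVia hA.nonneg hA.isSymm
    (hA.exists_pos (by omega)) (hround u) (hround v)

theorem expIs_two_mul_add_one (hs₁ : 1 ≤ s) (hs : s + 3 ≤ n) {h : Fin n}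
    (hchord : ∀ j : Fin n, s ≤ j → (j : ℕ) + 2 ≤ n → 0 < A j h) :
    IsPrimitive A ∧ ExpIs A (2 * (s + 1)) := by
  have hpos := hA.pow_two_mul_add_one_apply_pos hs₁ hs hchord
  exact ⟨⟨hA.nonneg, _, by omega, hpos⟩, ⟨by omega, hpos⟩,
    fun k hk ↦ hA.two_mul_add_one_le_of_forall_pow_apply_pos (by omega) hk.2⟩

end IsChordedPath

theorem IsChordedPath.exists_eq_two_mul_of_expIs {A : Matrix (Fin n) (Fin n) ℝ}
    (hA : IsChordedPath A 1) (hn : 2 ≤ n) (hprim : IsPrimitive A) {e : ℕ} (he : ExpIs A e) :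
    ∃ t, 2 ≤ t ∧ t ≤ n - 2 ∧ e = 2 * t := by
  obtain ⟨-, k, -, hk⟩ := hprim
  obtain ⟨c, hc, hc3, hcn⟩ := hA.exists_odd_chord (h := ⟨n - 1, by omega⟩) (by simp only; omega)
    (by omega) hk
  have hupper : e ≤ 2 * (n - 2) :=
    he.2 ⟨by omega, hA.pow_two_mul_sub_two_apply_pos (by simp only; omega) hc hc3 hcn⟩
  have hlower : 2 * (1 + 1) ≤ e := hA.two_mul_add_one_le_of_forall_pow_apply_pos (by omega) he.1.2
  have heven : e % 2 = 0 := by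
    by_contra hodd
    have := he.2 ⟨by omega, hA.pow_sub_one_apply_pos_of_odd (by omega) (by omega) he.1.2⟩
    omega
  exact ⟨e / 2, by omega, by omega, by omega⟩

namespace IsCompanion

variable {C : Matrix (Fin n) (Fin n) ℝ} (hC : IsCompanion C)
include hC

theorem nonneg (i j : Fin n) : 0 ≤ C i j := by
  have := hC i j
  split_ifs at this
  · exact this ▸ zero_le_one
  · exact this.ge
  · rcases this with h | h <;> simp [h]

theorem eq_one_of_succ_eq {i j : Fin n} (hij : (i : ℕ) + 1 = j) : C i j = 1 := by
  have := hC i j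
  rwa [if_pos (hij ▸ j.isLt), if_pos hij.symm] at this

theorem succ_eq_of_pos {i j : Fin n} (hij : 0 < C i j) (hi : (i : ℕ) + 1 < n) :
    (i : ℕ) + 1 = j := by
  have := hC i j
  rw [if_pos hi] at this
  split_ifs at this with h
  · exact h.symm
  · exact absurd this hij.ne'

theorem isChordedPath
    (hlast : ∀ i j : Fin n, (i : ℕ) + 1 = n → 0 < C i j → s ≤ j ∧ (j : ℕ) + 1 < n) :
    IsChordedPath (C + Cᵀ) s where
  nonneg i j := add_nonneg (hC.nonneg i j) (hC.nonneg j i)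
  isSymm := isSymm_add_transpose_self C
  pos_of_succ_eq i j hij := by
    rw [Matrix.add_apply, hC.eq_one_of_succ_eq hij]
    exact add_pos_of_pos_of_nonneg one_pos (hC.nonneg j i)
  adj i j hij := by
    have edge : ∀ i j : Fin n, 0 < C i j →
        (i : ℕ) + 1 = j ∨ ((i : ℕ) + 1 = n ∧ s ≤ j ∧ (j : ℕ) + 1 < n) := fun i j hij ↦ by
      by_cases hi : (i : ℕ) + 1 < n
      · exact .inl (hC.succ_eq_of_pos hij hi)
      · exact .inr ⟨by omega, hlast i j (by omega) hij⟩
    rw [Matrix.add_apply, transpose_apply] at hij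
    rcases (hC.nonneg i j).lt_or_eq with h | h
    · rcases edge i j h with h' | h' <;> tauto
    · rcases edge j i (by rw [← h, zero_add] at hij; exact hij) with h' | h' <;> tauto

end IsCompanion

theorem isChordedPath_of_mem_companionClass {hpos : 0 < n} {A : Matrix (Fin n) (Fin n) ℝ}
    (hA : A ∈ companionClass n hpos 0 0) : IsChordedPath A 1 := by
  obtain ⟨C, hC, hfirst, hlast, rfl⟩ := hA
  refine hC.isChordedPath fun i j hi hij ↦ ?_
  obtain rfl : i = ⟨n - 1, Nat.sub_lt hpos one_pos⟩ := Fin.ext (by simp only; omega)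
  constructor <;> by_contra hj
  · obtain rfl : j = ⟨0, hpos⟩ := Fin.ext (by simp only; omega)
    exact hij.ne' hfirst
  · obtain rfl : j = ⟨n - 1, Nat.sub_lt hpos one_pos⟩ := Fin.ext (by simp only; omega)
    exact hij.ne' hlast

/-- Ones in the last row only up to column `n - 3`: the path already joins `n - 2` to `n - 1`,
so the symmetrization stays a `(0,1)`-matrix. -/
def chordCompanion (n s : ℕ) : Matrix (Fin n) (Fin n) ℝ :=
  Matrix.of fun i j ↦ if (i : ℕ) + 1 < n then (if (j : ℕ) = i + 1 then 1 else 0)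
    else if s ≤ (j : ℕ) ∧ (j : ℕ) + 3 ≤ n then 1 else 0

theorem isCompanion_chordCompanion : IsCompanion (chordCompanion n s) := fun i j ↦ by
  simp only [chordCompanion, of_apply]
  split_ifs <;> simp

def chordMatrix (n s : ℕ) : Matrix (Fin n) (Fin n) ℝ :=
  chordCompanion n s + (chordCompanion n s)ᵀ

theorem chordMatrix_mem_companionClass (hpos : 0 < n) (hs : 1 ≤ s) :
    chordMatrix n s ∈ companionClass n hpos 0 0 :=
  ⟨_, isCompanion_chordCompanion,
    by simp only [chordCompanion, of_apply]; rw [if_neg (by omega), if_neg (by omega)],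
    by simp only [chordCompanion, of_apply]; rw [if_neg (by omega), if_neg (by omega)], rfl⟩

theorem expIs_chordMatrix (hs₁ : 1 ≤ s) (hs : s + 3 ≤ n) :
    IsPrimitive (chordMatrix n s) ∧ ExpIs (chordMatrix n s) (2 * (s + 1)) := by
  have hA : IsChordedPath (chordMatrix n s) s :=
    isCompanion_chordCompanion.isChordedPath fun i j hi hij ↦ by
      simp only [chordCompanion, of_apply] at hij
      split_ifs at hij <;> first | omega | exact absurd hij (lt_irrefl 0)
  refine hA.expIs_two_mul_add_one hs₁ hs (h := ⟨n - 1, by omega⟩) fun j hsj hjn ↦ ?_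
  have := j.isLt
  simp only [chordMatrix, chordCompanion, Matrix.add_apply, transpose_apply, of_apply]
  split_ifs <;> norm_num <;> omega

def lollipop (n : ℕ) : Matrix (Fin n) (Fin n) ℝ :=
  Matrix.of fun i j : Fin n =>
    if (i : ℕ) + 1 = (j : ℕ) ∨ (j : ℕ) + 1 = (i : ℕ) ∨
      ((i : ℕ) = n - 1 ∧ (j : ℕ) = n - 3) ∨
      ((i : ℕ) = n - 3 ∧ (j : ℕ) = n - 1) then (1 : ℝ) else 0

theorem lollipop_eq_chordMatrix (hn : 2 ≤ n) : lollipop n = chordMatrix n (n - 3) := by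
  ext i j
  have := i.isLt
  have := j.isLt
  simp only [lollipop, chordMatrix, chordCompanion, Matrix.add_apply, transpose_apply, of_apply]
  split_ifs <;> norm_num <;> omega

theorem expIs_lollipop (hn : 4 ≤ n) :
    IsPrimitive (lollipop n) ∧ ExpIs (lollipop n) (2 * (n - 2)) := by
  rw [lollipop_eq_chordMatrix (by omega), show n - 2 = n - 3 + 1 by omega]
  exact expIs_chordMatrix (by omega) (by omega)

end

/-- For `n ≥ 4`, `E(PSC_n^{0,0}) = {2t : 2 ≤ t ≤ n-2}`; in particular the
maximum exponent `2(n-2)` is attained by the lollipop graph: the path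
`1 - 2 - ⋯ - n` together with the edge `{n, n-2}` (0-based: edge
`{n-1, n-3}`). -/
theorem expSet_PSC_zero_zero {n : ℕ} (hn : 4 ≤ n) :
    expSet (companionClass n (by omega) 0 0) =
        {e : ℕ | ∃ t : ℕ, 2 ≤ t ∧ t ≤ n - 2 ∧ e = 2 * t} ∧
      (∀ L : Matrix (Fin n) (Fin n) ℝ,
        (L = Matrix.of fun i j : Fin n =>
          if (i : ℕ) + 1 = (j : ℕ) ∨ (j : ℕ) + 1 = (i : ℕ) ∨
            ((i : ℕ) = n - 1 ∧ (j : ℕ) = n - 3) ∨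
            ((i : ℕ) = n - 3 ∧ (j : ℕ) = n - 1) then (1 : ℝ) else 0) →
        IsPrimitive L ∧ ExpIs L (2 * (n - 2))) := by
  refine ⟨Set.ext fun e ↦ ⟨?_, ?_⟩, fun L hL ↦ hL ▸ expIs_lollipop hn⟩
  · rintro ⟨A, hA, hprim, he⟩
    exact (isChordedPath_of_mem_companionClass hA).exists_eq_two_mul_of_expIs (by omega)
      hprim he
  · rintro ⟨t, ht, htn, rfl⟩
    obtain ⟨hprim, he⟩ := expIs_chordMatrix (n := n) (s := t - 1) (by omega) (by omega)
    rw [show t - 1 + 1 = t by omega] at he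
    exact ⟨_, chordMatrix_mem_companionClass _ (by omega), hprim, he⟩
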